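/- arXiv:1906.04642 — 2 statements merged into one kernel-verified Lean document; each statement's English description precedes it below -/
import Mathlib

section
/- Under the hypotheses of the perturbation theorem (‖A(t)‖, ‖B(t)‖ ≤ M, ‖T(t,s)‖ ≤ Ke^{α(t−s)}, ‖∫_{t₁}^{t₂}B‖ ≤ δ for |t₂−t₁| ≤ h), if α < 0 and h is large enough and δ small enough so that β = α + 3MKδ + log((1+δ)K)/h < 0, then the perturbed system ẏ = A(t)y + B(t)y is uniformly exponentially (asymptotically) stable: ‖S(t,s)‖ ≤ (1+δ)K e^{β(t−s)} → 0 as t − s → ∞. -/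
/-!
For `y(u) = S(u,s)x`, differentiating `u ↦ T(t,u) (1 + ∫_u^t B) y(u)` and integrating from `s`
to `t` gives
`y(t) = T(t,s) (1 + ∫_s^t B) y(s) + ∫_s^t T(t,u) ((∫_u^t B) (A(u) + B(u)) - A(u) ∫_u^t B) y(u) du`,
in which `B` enters only through its integrals over subintervals of `[s,t]`. When `t - s ≤ h`
these have norm at most `δ`, and Grönwall's inequality applied to `e^{-α(u-s)} ‖y(u)‖` gives
`‖S(t,s)‖ ≤ (1+δ)K e^{(α+3MKδ)(t-s)}`. A longer interval is cut into `⌊(t-s)/h⌋ + 1` pieces of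
length at most `h`; by the cocycle property of `S` each additional piece costs a factor
`(1+δ)K = e^{log((1+δ)K)}`, which produces the term `log((1+δ)K)/h` of the exponent.
-/

open Real Set intervalIntegral Filter Topology

section Gronwall

variable {E : Type*} [NormedAddCommGroup E] [NormedSpace ℝ E]

theorem norm_le_exp_mul_sub_of_hasDerivAt {w w' : ℝ → E} {L : ℝ}
    (hw : ∀ t, HasDerivAt w (w' t) t) (hw' : ∀ t, ‖w' t‖ ≤ L * ‖w t‖) {c t : ℝ} (hct : c ≤ t) :
    ‖w t‖ ≤ exp (L * (t - c)) * ‖w c‖ := by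
  have := norm_le_gronwallBound_of_norm_deriv_right_le (δ := ‖w c‖) (K := L) (ε := 0)
    (continuous_iff_continuousAt.2 fun t => (hw t).continuousAt).continuousOn
    (fun r _ => (hw r).hasDerivWithinAt) le_rfl (fun r _ => by simpa using hw' r) t ⟨hct, le_rfl⟩
  rwa [gronwallBound_ε0, mul_comm] at this

theorem norm_le_exp_mul_abs_sub_of_hasDerivAt {w w' : ℝ → E} {L : ℝ}
    (hw : ∀ t, HasDerivAt w (w' t) t) (hw' : ∀ t, ‖w' t‖ ≤ L * ‖w t‖) (c t : ℝ) :
    ‖w t‖ ≤ exp (L * |t - c|) * ‖w c‖ := by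
  rcases le_total c t with hct | htc
  · rw [abs_of_nonneg (sub_nonneg.2 hct)]
    exact norm_le_exp_mul_sub_of_hasDerivAt hw hw' hct
  · have hw_neg (r : ℝ) : HasDerivAt (fun r => w (-r)) (-w' (-r)) r := by
      simpa [Function.comp_def] using (hw (-r)).scomp r (hasDerivAt_neg r)
    have := norm_le_exp_mul_sub_of_hasDerivAt hw_neg (fun r => by simpa using hw' (-r))
      (neg_le_neg htc)
    rw [abs_of_nonpos (sub_nonpos.2 htc)]
    simpa [neg_add_eq_sub] using this

theorem eq_zero_of_hasDerivAt_of_norm_le {w w' : ℝ → E} {L c : ℝ}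
    (hw : ∀ t, HasDerivAt w (w' t) t) (hw' : ∀ t, ‖w' t‖ ≤ L * ‖w t‖) (hc : w c = 0) (t : ℝ) :
    w t = 0 :=
  norm_le_zero_iff.1 <| by simpa [hc] using norm_le_exp_mul_abs_sub_of_hasDerivAt hw hw' c t

theorem le_mul_exp_of_le_add_mul_integral {ψ : ℝ → ℝ} {a L s t : ℝ} (hψ : Continuous ψ) (hL : 0 ≤ L)
    (hst : s ≤ t) (h : ∀ r ∈ Icc s t, ψ r ≤ a + L * ∫ u in s..r, ψ u) :
    ψ t ≤ a * exp (L * (t - s)) := by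
  have hΨ (r : ℝ) : HasDerivAt (fun r => ∫ u in s..r, ψ u) (ψ r) r :=
    (hψ.integral_hasStrictDerivAt s r).hasDerivAt
  have hΨt := le_gronwallBound_of_liminf_deriv_right_le (δ := 0) (K := L) (ε := a)
    (continuous_iff_continuousAt.2 fun r => (hΨ r).continuousAt).continuousOn
    (fun r _ _ hr => (hΨ r).hasDerivWithinAt.liminf_right_slope_le hr) (by simp)
    (fun r hr => by linarith [h r (Ico_subset_Icc_self hr)]) t ⟨hst, le_rfl⟩
  have hbound : a + L * gronwallBound 0 L a (t - s) = a * exp (L * (t - s)) := by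
    rcases eq_or_ne L 0 with rfl | hL
    · simp
    · rw [gronwallBound_of_K_ne_0 hL]
      field_simp
      ring
  calc ψ t ≤ a + L * ∫ u in s..t, ψ u := h t ⟨hst, le_rfl⟩
    _ ≤ a * exp (L * (t - s)) := by
      rw [← hbound]
      gcongr

theorem le_mul_exp_of_le_mul_exp_add_integral {f : ℝ → ℝ} {a α L s t : ℝ} (hf : Continuous f)
    (hL : 0 ≤ L) (hst : s ≤ t)
    (h : ∀ r ∈ Icc s t, f r ≤ a * exp (α * (r - s)) + L * ∫ u in s..r, exp (α * (r - u)) * f u) :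
    f t ≤ a * exp ((α + L) * (t - s)) := by
  set ψ : ℝ → ℝ := fun u => exp (-(α * (u - s))) * f u with hψ
  have hf_eq (u : ℝ) : f u = exp (α * (u - s)) * ψ u := by
    rw [hψ, ← mul_assoc, ← exp_add, add_neg_cancel, exp_zero, one_mul]
  have hkernel (r u : ℝ) : exp (α * (r - u)) * f u = exp (α * (r - s)) * ψ u := by
    rw [hf_eq, ← mul_assoc, ← exp_add, hψ]
    ring_nf
  have hψt : ψ t ≤ a * exp (L * (t - s)) := by
    refine le_mul_exp_of_le_add_mul_integral (by fun_prop) hL hst fun r hr => ?_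
    have := h r hr
    simp only [hkernel r, integral_const_mul, hf_eq r] at this
    nlinarith [exp_pos (α * (r - s))]
  calc f t = exp (α * (t - s)) * ψ t := hf_eq t
    _ ≤ exp (α * (t - s)) * (a * exp (L * (t - s))) := by gcongr
    _ = a * exp ((α + L) * (t - s)) := by rw [add_mul, exp_add]; ring

end Gronwall

section EvolutionOperator

variable {E : Type*} [NormedAddCommGroup E] [NormedSpace ℝ E]

structure IsEvolutionOperator (G : ℝ → E →L[ℝ] E) (P : ℝ → ℝ → E →L[ℝ] E) : Prop where
  apply_self : ∀ s, P s s = 1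
  hasDerivAt : ∀ s x t, HasDerivAt (fun r => P r s x) (G t (P t s x)) t

namespace IsEvolutionOperator

variable {G : ℝ → E →L[ℝ] E} {P : ℝ → ℝ → E →L[ℝ] E} {N : ℝ}

theorem continuous_apply (hP : IsEvolutionOperator G P) (s : ℝ) (x : E) :
    Continuous fun r => P r s x :=
  continuous_iff_continuousAt.2 fun r => (hP.hasDerivAt s x r).continuousAt

theorem mul_eq (hP : IsEvolutionOperator G P) (hG : ∀ t, ‖G t‖ ≤ N) (s r t : ℝ) :
    P t r * P r s = P t s := by
  ext x
  have hw (u : ℝ) : HasDerivAt (fun u => P u r (P r s x) - P u s x)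
      (G u (P u r (P r s x) - P u s x)) u := by
    simpa only [map_sub] using (hP.hasDerivAt r (P r s x) u).fun_sub (hP.hasDerivAt s x u)
  have := eq_zero_of_hasDerivAt_of_norm_le hw (fun u => (G u).le_of_opNorm_le (hG u) _)
    (c := r) (by simp [hP.apply_self]) t
  exact sub_eq_zero.1 this

theorem norm_le (hP : IsEvolutionOperator G P) (hG : ∀ t, ‖G t‖ ≤ N) (s t : ℝ) :
    ‖P t s‖ ≤ exp (N * |t - s|) :=
  (P t s).opNorm_le_bound (exp_pos _).le fun x => by
    simpa [hP.apply_self] using norm_le_exp_mul_abs_sub_of_hasDerivAt (hP.hasDerivAt s x)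
      (fun r => (G r).le_of_opNorm_le (hG r) _) s t

theorem norm_sub_one_le [CompleteSpace E] (hP : IsEvolutionOperator G P) (hGc : Continuous G)
    (hG : ∀ t, ‖G t‖ ≤ N) (a b : ℝ) :
    ‖P b a - 1‖ ≤ N * exp (N * |b - a|) * |b - a| := by
  have hN : 0 ≤ N := (norm_nonneg _).trans (hG 0)
  refine (P b a - 1).opNorm_le_bound (by positivity) fun x => ?_
  have hftc : P b a x - x = ∫ v in a..b, G v (P v a x) := by
    rw [integral_eq_sub_of_hasDerivAt (fun v _ => hP.hasDerivAt a x v)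
      ((hGc.clm_apply (hP.continuous_apply a x)).intervalIntegrable a b), hP.apply_self]
    rfl
  have hbound : ∀ v ∈ uIoc a b, ‖G v (P v a x)‖ ≤ N * exp (N * |b - a|) * ‖x‖ := fun v hv => by
    have hva : |v - a| ≤ |b - a| := abs_sub_left_of_mem_uIcc (uIoc_subset_uIcc hv)
    calc ‖G v (P v a x)‖ ≤ N * (exp (N * |v - a|) * ‖x‖) :=
          (G v).le_of_opNorm_le_of_le (hG v) ((P v a).le_of_opNorm_le (hP.norm_le hG a v) x)
      _ ≤ N * exp (N * |b - a|) * ‖x‖ := by rw [← mul_assoc]; gcongr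
  rw [sub_apply, one_apply_eq_self, hftc]
  exact (norm_integral_le_of_norm_le_const hbound).trans_eq (by ring)

theorem continuous_fst [CompleteSpace E] (hP : IsEvolutionOperator G P) (hGc : Continuous G)
    (hG : ∀ t, ‖G t‖ ≤ N) (s : ℝ) : Continuous fun r => P r s := by
  refine continuous_iff_continuousAt.2 fun u => ?_
  have hbound : Tendsto (fun r => N * exp (N * |r - u|) * |r - u|) (𝓝 u) (𝓝 0) := by
    have : Continuous fun r => N * exp (N * |r - u|) * |r - u| := by fun_prop
    simpa using this.tendsto u
  have hPu : Tendsto (fun r => P r u) (𝓝 u) (𝓝 1) :=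
    tendsto_iff_norm_sub_tendsto_zero.2 <|
      squeeze_zero (fun _ => norm_nonneg _) (fun r => hP.norm_sub_one_le hGc hG u r) hbound
  have := hPu.mul_const (P u s)
  simp only [one_mul, hP.mul_eq hG] at this
  exact this

theorem hasDerivAt_fst [CompleteSpace E] (hP : IsEvolutionOperator G P) (hGc : Continuous G)
    (hG : ∀ t, ‖G t‖ ≤ N) (s u : ℝ) : HasDerivAt (fun r => P r s) (G u * P u s) u := by
  have hg : Continuous fun v => G v * P v s := hGc.mul (hP.continuous_fst hGc hG s)
  have hint (b : ℝ) : P b s = P u s + ∫ v in u..b, G v * P v s := by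
    ext x
    rw [add_apply, ContinuousLinearMap.intervalIntegral_apply (hg.intervalIntegrable u b)]
    simp only [mul_apply_eq_comp]
    rw [integral_eq_sub_of_hasDerivAt (fun v _ => hP.hasDerivAt s x v)
        ((hGc.clm_apply (hP.continuous_apply s x)).intervalIntegrable u b)]
    simp
  rw [funext hint]
  exact (hg.integral_hasStrictDerivAt u u).hasDerivAt.const_add _

theorem hasDerivAt_snd [CompleteSpace E] (hP : IsEvolutionOperator G P) (hGc : Continuous G)
    (hG : ∀ t, ‖G t‖ ≤ N) (s u : ℝ) : HasDerivAt (fun r => P s r) (-(P s u * G u)) u := by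
  let U (r : ℝ) : (E →L[ℝ] E)ˣ :=
    ⟨P r s, P s r, by rw [hP.mul_eq hG, hP.apply_self], by rw [hP.mul_eq hG, hP.apply_self]⟩
  have hinv : (fun r => P s r) = fun r => Ring.inverse (P r s) :=
    funext fun r => (Ring.inverse_unit (U r)).symm
  have h := (hasFDerivAt_ringInverse (U u)).comp_hasDerivAt u (hP.hasDerivAt_fst hGc hG s u)
  rw [Function.comp_def, ← hinv] at h
  refine h.congr_deriv ?_
  simp [U, mul_assoc, hP.mul_eq hG, hP.apply_self]

end IsEvolutionOperator

end EvolutionOperator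

theorem norm_mul_add_sub_mul_le {R : Type*} [NormedRing R] {a b c : R} {M δ : ℝ}
    (ha : ‖a‖ ≤ M) (hb : ‖b‖ ≤ M) (hc : ‖c‖ ≤ δ) : ‖c * (a + b) - a * c‖ ≤ 3 * M * δ := by
  have hM : 0 ≤ M := (norm_nonneg _).trans ha
  have hδ : 0 ≤ δ := (norm_nonneg _).trans hc
  calc ‖c * (a + b) - a * c‖ ≤ ‖c‖ * (‖a‖ + ‖b‖) + ‖a‖ * ‖c‖ :=
        (norm_sub_le _ _).trans <| add_le_add
          ((norm_mul_le _ _).trans (by gcongr; exact norm_add_le _ _)) (norm_mul_le _ _)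
    _ ≤ δ * (M + M) + M * δ := by gcongr
    _ = 3 * M * δ := by ring

section Perturbation

variable {E : Type*} [NormedAddCommGroup E] [NormedSpace ℝ E] [CompleteSpace E]
  {A B : ℝ → E →L[ℝ] E} {T : ℝ → ℝ → E →L[ℝ] E} {y : ℝ → E} {M K α δ h : ℝ}

theorem IsEvolutionOperator.eq_add_integral_of_hasDerivAt_add (hT : IsEvolutionOperator A T)
    (hAc : Continuous A) (hA : ∀ t, ‖A t‖ ≤ M) (hBc : Continuous B)
    (hy : ∀ u, HasDerivAt y ((A u + B u) (y u)) u) (s t : ℝ) :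
    y t = (T t s * (1 + ∫ v in s..t, B v)) (y s) +
      ∫ u in s..t, (T t u * ((∫ v in u..t, B v) * (A u + B u) - A u * ∫ v in u..t, B v)) (y u) := by
  set C : ℝ → E →L[ℝ] E := fun u => ∫ v in u..t, B v with hC_def
  have hC (u : ℝ) : HasDerivAt C (-B u) u :=
    integral_hasDerivAt_left (hBc.intervalIntegrable _ _) (hBc.stronglyMeasurableAtFilter _ _)
      hBc.continuousAt
  have hTt (u : ℝ) := hT.hasDerivAt_snd hAc hA t u
  have hz (u : ℝ) : HasDerivAt (fun u => (T t u * (1 + C u)) (y u))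
      ((T t u * (C u * (A u + B u) - A u * C u)) (y u)) u := by
    refine (((hTt u).fun_mul ((hC u).const_add 1)).clm_apply (hy u)).congr_deriv ?_
    rw [← mul_apply_eq_comp (T t u * (1 + C u)), ← add_apply]
    congr 1
    noncomm_ring
  have hcont : Continuous fun u => (T t u * (C u * (A u + B u) - A u * C u)) (y u) := by
    have : Continuous fun u => T t u := continuous_iff_continuousAt.2 fun u => (hTt u).continuousAt
    have : Continuous C := continuous_iff_continuousAt.2 fun u => (hC u).continuousAt
    have : Continuous y := continuous_iff_continuousAt.2 fun u => (hy u).continuousAt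
    fun_prop
  have hftc := integral_eq_sub_of_hasDerivAt (fun u _ => hz u) (hcont.intervalIntegrable s t)
  simp only [hC_def, integral_same, add_zero, mul_one, hT.apply_self, one_apply_eq_self] at hftc
  rw [hftc]
  abel

theorem IsEvolutionOperator.norm_le_add_integral_of_hasDerivAt_add (hT : IsEvolutionOperator A T)
    (hAc : Continuous A) (hA : ∀ t, ‖A t‖ ≤ M) (hBc : Continuous B) (hB : ∀ t, ‖B t‖ ≤ M)
    (hTbound : ∀ s t, s ≤ t → ‖T t s‖ ≤ K * exp (α * (t - s)))
    (hBint : ∀ t₁ t₂ : ℝ, |t₂ - t₁| ≤ h → ‖∫ t in t₁..t₂, B t‖ ≤ δ)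
    (hy : ∀ u, HasDerivAt y ((A u + B u) (y u)) u) {s t : ℝ} (hst : s ≤ t) (hth : t - s ≤ h) :
    ‖y t‖ ≤ (1 + δ) * K * exp (α * (t - s)) * ‖y s‖ +
      3 * M * K * δ * ∫ u in s..t, exp (α * (t - u)) * ‖y u‖ := by
  have hBint' {u : ℝ} (hu : s ≤ u) (hut : u ≤ t) : ‖∫ v in u..t, B v‖ ≤ δ :=
    hBint u t (by rw [abs_of_nonneg (by linarith)]; linarith)
  have hK : 0 ≤ K := (norm_nonneg _).trans ((hTbound s s le_rfl).trans_eq (by simp))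
  have hy_cont : Continuous y := continuous_iff_continuousAt.2 fun u => (hy u).continuousAt
  rw [hT.eq_add_integral_of_hasDerivAt_add hAc hA hBc hy s t]
  refine (norm_add_le _ _).trans (add_le_add ?_ ?_)
  · refine (ContinuousLinearMap.le_of_opNorm_le _ ?_ _)
    calc ‖T t s * (1 + ∫ v in s..t, B v)‖ ≤ K * exp (α * (t - s)) * (1 + δ) :=
          (norm_mul_le _ _).trans <| mul_le_mul (hTbound s t hst)
            ((norm_add_le _ _).trans
              (add_le_add ContinuousLinearMap.norm_id_le (hBint' le_rfl hst)))
            (norm_nonneg _) (by positivity)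
      _ = (1 + δ) * K * exp (α * (t - s)) := by ring
  · rw [← integral_const_mul]
    refine norm_integral_le_of_norm_le hst (MeasureTheory.ae_of_all _ fun u hu => ?_)
      (Continuous.intervalIntegrable (by fun_prop) _ _)
    calc _ ≤ K * exp (α * (t - u)) * (3 * M * δ) * ‖y u‖ :=
          ContinuousLinearMap.le_of_opNorm_le _ ((norm_mul_le _ _).trans (mul_le_mul
            (hTbound u t hu.2) (norm_mul_add_sub_mul_le (hA u) (hB u) (hBint' hu.1.le hu.2))
            (norm_nonneg _) (by positivity))) _
      _ = 3 * M * K * δ * (exp (α * (t - u)) * ‖y u‖) := by ring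

theorem IsEvolutionOperator.norm_le_mul_exp_of_hasDerivAt_add (hT : IsEvolutionOperator A T)
    (hAc : Continuous A) (hA : ∀ t, ‖A t‖ ≤ M) (hBc : Continuous B) (hB : ∀ t, ‖B t‖ ≤ M)
    (hTbound : ∀ s t, s ≤ t → ‖T t s‖ ≤ K * exp (α * (t - s)))
    (hBint : ∀ t₁ t₂ : ℝ, |t₂ - t₁| ≤ h → ‖∫ t in t₁..t₂, B t‖ ≤ δ)
    (hy : ∀ u, HasDerivAt y ((A u + B u) (y u)) u) {s t : ℝ} (hst : s ≤ t) (hth : t - s ≤ h) :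
    ‖y t‖ ≤ (1 + δ) * K * exp ((α + 3 * M * K * δ) * (t - s)) * ‖y s‖ := by
  have hM : 0 ≤ M := (norm_nonneg _).trans (hA 0)
  have hK : 0 ≤ K := (norm_nonneg _).trans ((hTbound s s le_rfl).trans_eq (by simp))
  have hδ : 0 ≤ δ := (norm_nonneg _).trans (hBint s s (by simp; linarith))
  have hy_cont : Continuous y := continuous_iff_continuousAt.2 fun u => (hy u).continuousAt
  have key (r : ℝ) (hr : r ∈ Icc s t) : ‖y r‖ ≤ (1 + δ) * K * ‖y s‖ * exp (α * (r - s)) +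
      3 * M * K * δ * ∫ u in s..r, exp (α * (r - u)) * ‖y u‖ := by
    simpa only [mul_right_comm _ (exp _)] using
      hT.norm_le_add_integral_of_hasDerivAt_add hAc hA hBc hB hTbound hBint hy hr.1
        (by linarith [hr.2])
  simpa only [mul_right_comm _ (exp _)] using
    le_mul_exp_of_le_mul_exp_add_integral (by fun_prop) (by positivity) hst key

end Perturbation

section Cocycle

variable {R : Type*} [NormedRing R] {P : ℝ → ℝ → R} {c γ h : ℝ}

theorem norm_le_pow_mul_exp_of_sub_le_mul (hc : 1 ≤ c) (hP : ∀ s r t, P t r * P r s = P t s)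
    (hshort : ∀ s t, s ≤ t → t - s ≤ h → ‖P t s‖ ≤ c * exp (γ * (t - s))) (n : ℕ) :
    ∀ s t, s ≤ t → t - s ≤ (n + 1) * h → ‖P t s‖ ≤ c ^ (n + 1) * exp (γ * (t - s)) := by
  induction n with
  | zero => simpa using hshort
  | succ n ih =>
    intro s t hst hle
    by_cases hshorter : t - s ≤ (n + 1) * h
    · exact (ih s t hst hshorter).trans (by gcongr; omega)
    · push Not at hshorter
      push_cast at hle
      have hh : 0 < h := by linarith
      have hsth : s ≤ t - h := by nlinarith [mul_nonneg n.cast_nonneg hh.le]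
      calc ‖P t s‖ = ‖P t (t - h) * P (t - h) s‖ := by rw [hP]
        _ ≤ c * exp (γ * h) * (c ^ (n + 1) * exp (γ * (t - h - s))) :=
          (norm_mul_le _ _).trans <| mul_le_mul
            (by simpa using hshort (t - h) t (by linarith) (by linarith))
            (ih s (t - h) hsth (by linarith)) (norm_nonneg _) (by positivity)
        _ = c ^ (n + 1 + 1) * exp (γ * (t - s)) := by
          rw [pow_succ, mul_mul_mul_comm, ← exp_add]; ring_nf

theorem norm_le_mul_exp_of_sub_le (hc : 1 ≤ c) (hh : 0 < h)
    (hP : ∀ s r t, P t r * P r s = P t s)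
    (hshort : ∀ s t, s ≤ t → t - s ≤ h → ‖P t s‖ ≤ c * exp (γ * (t - s))) {s t : ℝ}
    (hst : s ≤ t) : ‖P t s‖ ≤ c * exp ((γ + log c / h) * (t - s)) := by
  set n := ⌊(t - s) / h⌋₊
  have hn : (n : ℝ) ≤ (t - s) / h := Nat.floor_le (div_nonneg (sub_nonneg.2 hst) hh.le)
  have hn' : t - s ≤ (n + 1) * h := ((div_le_iff₀ hh).1 (Nat.lt_floor_add_one _).le)
  have hpow : c ^ n ≤ exp (log c / h * (t - s)) := by
    rw [← exp_log (pow_pos (zero_lt_one.trans_le hc) n), Real.log_pow]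
    refine exp_le_exp.2 ?_
    calc (n : ℝ) * log c ≤ (t - s) / h * log c := by gcongr; exact log_nonneg hc
      _ = log c / h * (t - s) := by ring
  calc ‖P t s‖ ≤ c ^ (n + 1) * exp (γ * (t - s)) :=
        norm_le_pow_mul_exp_of_sub_le_mul hc hP hshort n s t hst hn'
    _ ≤ c * (exp (log c / h * (t - s)) * exp (γ * (t - s))) := by
        rw [pow_succ', mul_assoc]; gcongr
    _ = c * exp ((γ + log c / h) * (t - s)) := by rw [← exp_add]; ring_nf

end Cocycle

theorem stmt1_general {X : Type*} [NormedAddCommGroup X] [NormedSpace ℝ X] [CompleteSpace X]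
    (A B : ℝ → X →L[ℝ] X) (hAc : Continuous A) (hBc : Continuous B)
    (M K α δ h : ℝ) (hK : 1 ≤ K) (hδ : 0 < δ) (hh : 0 < h)
    (hAb : ∀ t, ‖A t‖ ≤ M) (hBb : ∀ t, ‖B t‖ ≤ M)
    (T S : ℝ → ℝ → X →L[ℝ] X)
    (hT0 : ∀ s, T s s = 1)
    (hTderiv : ∀ s (x : X) (t : ℝ), HasDerivAt (fun r => T r s x) (A t (T t s x)) t)
    (hTbound : ∀ s t, s ≤ t → ‖T t s‖ ≤ K * Real.exp (α * (t - s)))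
    (hBint : ∀ t₁ t₂ : ℝ, |t₂ - t₁| ≤ h → ‖∫ t in t₁..t₂, B t‖ ≤ δ)
    (hS0 : ∀ s, S s s = 1)
    (hSderiv : ∀ s (x : X) (t : ℝ),
      HasDerivAt (fun r => S r s x) (A t (S t s x) + B t (S t s x)) t)
    (hβ : α + 3 * M * K * δ + Real.log ((1 + δ) * K) / h < 0) :
    (∀ s t, s ≤ t →
      ‖S t s‖ ≤ (1 + δ) * K *
        Real.exp ((α + 3 * M * K * δ + Real.log ((1 + δ) * K) / h) * (t - s))) ∧
    (∀ s : ℝ, Filter.Tendsto (fun t => ‖S t s‖) Filter.atTop (nhds 0)) := by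
  have hT : IsEvolutionOperator A T := ⟨hT0, hTderiv⟩
  have hS : IsEvolutionOperator (fun t => A t + B t) S := ⟨hS0, hSderiv⟩
  have hshort (s t : ℝ) (hst : s ≤ t) (hth : t - s ≤ h) :
      ‖S t s‖ ≤ (1 + δ) * K * exp ((α + 3 * M * K * δ) * (t - s)) :=
    (S t s).opNorm_le_bound (by positivity) fun x => by
      simpa [hS0] using hT.norm_le_mul_exp_of_hasDerivAt_add hAc hAb hBc hBb hTbound hBint
        (hS.hasDerivAt s x) hst hth
  have hc : 1 ≤ (1 + δ) * K := by nlinarith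
  have hbound (s t : ℝ) (hst : s ≤ t) :=
    norm_le_mul_exp_of_sub_le hc hh
      (hS.mul_eq fun t => (norm_add_le _ _).trans (add_le_add (hAb t) (hBb t))) hshort hst
  refine ⟨hbound, fun s => ?_⟩
  have hshift : Tendsto (fun t : ℝ => t - s) atTop atTop :=
    tendsto_atTop_add_const_right _ _ tendsto_id
  have hlim := (tendsto_exp_atBot.comp (hshift.const_mul_atTop_of_neg hβ)).const_mul ((1 + δ) * K)
  rw [mul_zero] at hlim
  exact squeeze_zero' (Eventually.of_forall fun t => norm_nonneg _)
    ((eventually_ge_atTop s).mono fun t => hbound s t) hlim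

/-- Under the hypotheses of the perturbation theorem, if `α < 0`
and `β = α + 3MKδ + log((1+δ)K)/h < 0`, then the perturbed system
`ẏ = A(t)y + B(t)y` is uniformly exponentially stable:
`‖S(t,s)‖ ≤ (1+δ)K e^{β(t-s)} → 0` as `t - s → ∞`. -/
theorem stmt1 {X : Type*} [NormedAddCommGroup X] [NormedSpace ℝ X] [CompleteSpace X]
    (A B : ℝ → X →L[ℝ] X) (hAc : Continuous A) (hBc : Continuous B)
    (M K α δ h : ℝ) (hM : 0 < M) (hK : 1 ≤ K) (hδ : 0 < δ) (hh : 0 < h)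
    (hAb : ∀ t, ‖A t‖ ≤ M) (hBb : ∀ t, ‖B t‖ ≤ M)
    (T S : ℝ → ℝ → X →L[ℝ] X)
    (hT0 : ∀ s, T s s = 1)
    (hTderiv : ∀ s (x : X) (t : ℝ), HasDerivAt (fun r => T r s x) (A t (T t s x)) t)
    (hTbound : ∀ s t, s ≤ t → ‖T t s‖ ≤ K * Real.exp (α * (t - s)))
    (hBint : ∀ t₁ t₂ : ℝ, |t₂ - t₁| ≤ h → ‖∫ t in t₁..t₂, B t‖ ≤ δ)
    (hS0 : ∀ s, S s s = 1)
    (hSderiv : ∀ s (x : X) (t : ℝ),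
      HasDerivAt (fun r => S r s x) (A t (S t s x) + B t (S t s x)) t)
    (hα : α < 0)
    (hβ : α + 3 * M * K * δ + Real.log ((1 + δ) * K) / h < 0) :
    (∀ s t, s ≤ t →
      ‖S t s‖ ≤ (1 + δ) * K *
        Real.exp ((α + 3 * M * K * δ + Real.log ((1 + δ) * K) / h) * (t - s))) ∧
    (∀ s : ℝ, Filter.Tendsto (fun t => ‖S t s‖) Filter.atTop (nhds 0)) :=
  stmt1_general A B hAc hBc M K α δ h hK hδ hh hAb hBb T S hT0 hTderiv hTbound hBint hS0 hSderiv hβ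
end

section
/- In Kakutani's construction, the operator W_ε (weighted shift with weights α_n = M/K^{m−1} when n = 2^{m−1}(2ℓ+1)) has norm ‖W_ε‖ = M, spectral radius ρ(W_ε) = M/K, and ‖L_m‖ = ε_m = M/K^{m−1} → 0 as m → ∞. -/
/-!
The operator norm of a weighted shift on `ℓ²` is the supremum of its weights, which gives
`‖W‖ = M` and `‖L m‖ = M / K ^ (m - 1)`.

For the spectral radius, `W ^ k` is again a weighted shift, with weights the products of `k`
consecutive weights of `W`. Since `k!` divides every product of `k` consecutive integers, such a
product is at most `M ^ k / K ^ v₂(k!)`, and `v₂((2 ^ j)!) = 2 ^ j - 1` gives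
`‖W ^ 2 ^ j‖ ≤ K (M / K) ^ 2 ^ j`, whence `ρ(W) ≤ M / K`. Conversely, for `0 ≤ λ < M / K` the
vector `v n = (λ / M) ^ n K ^ v₂(n!)` lies in `ℓ²` and is an eigenvector of `W*` for `λ`, so `λ`
belongs to the spectrum; the spectrum being closed, so does `M / K`. Here `v₂` is the 2-adic
valuation.
-/

open Finset Filter Topology
open scoped lp Nat InnerProductSpace ComplexConjugate

namespace Nat

theorem factorization_factorial_le_sum_factorization (p n k : ℕ) :
    (k !).factorization p ≤ ∑ t ∈ range k, (n + t + 1).factorization p := by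
  have hprod : (n + 1).ascFactorial k = ∏ t ∈ range k, (n + t + 1) := by
    rw [ascFactorial_eq_prod_range]
    exact prod_congr rfl fun t _ => by ring
  have hle := (factorization_le_iff_dvd (factorial_ne_zero k) (by positivity)).mpr
    (factorial_dvd_ascFactorial (n + 1) k) p
  rwa [hprod, factorization_prod fun t _ => succ_ne_zero _, Finsupp.finsetSum_apply] at hle

theorem factorization_two_factorial_le (n : ℕ) : (n !).factorization 2 ≤ n := by
  have := sub_one_mul_factorization_factorial (n := n) prime_two
  omega

theorem factorization_two_factorial_two_pow (j : ℕ) :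
    ((2 ^ j)!).factorization 2 = 2 ^ j - 1 := by
  have := sub_one_mul_factorization_factorial (n := 2 ^ j) prime_two
  rw [← mul_one (2 ^ j), digits_base_pow_mul one_lt_two one_pos, mul_one] at this
  simpa using this

end Nat

theorem spectralRadius_le_of_frequently_norm_pow_le {𝕜 A : Type*} [NormedField 𝕜] [NormedRing A]
    [NormedAlgebra 𝕜 A] [CompleteSpace A] [NormOneClass A] (a : A) {r C : ℝ} (hr : 0 ≤ r)
    (hC : 0 < C) (h : ∃ᶠ k in atTop, ‖a ^ k‖ ≤ C * r ^ k) :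
    spectralRadius 𝕜 a ≤ ENNReal.ofReal r := by
  have hroot : ∀ n : ℕ, ‖a ^ (n + 1)‖ ≤ C * r ^ (n + 1) →
      spectralRadius 𝕜 a ≤ ENNReal.ofReal (C ^ ((n + 1 : ℕ) : ℝ)⁻¹ * r) := by
    intro n hn
    have hpos : (0 : ℝ) ≤ ((n + 1 : ℕ) : ℝ)⁻¹ := by positivity
    calc spectralRadius 𝕜 a ≤ (‖a ^ (n + 1)‖₊ : ENNReal) ^ ((n + 1 : ℕ) : ℝ)⁻¹ := by
          simpa using spectrum.spectralRadius_le_pow_nnnorm_pow_one_div 𝕜 a n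
      _ = ENNReal.ofReal (‖a ^ (n + 1)‖ ^ ((n + 1 : ℕ) : ℝ)⁻¹) := by
          rw [← ENNReal.ofReal_rpow_of_nonneg (norm_nonneg _) hpos, ofReal_norm, enorm_eq_nnnorm]
      _ ≤ ENNReal.ofReal ((C * r ^ (n + 1)) ^ ((n + 1 : ℕ) : ℝ)⁻¹) := by gcongr
      _ = ENNReal.ofReal (C ^ ((n + 1 : ℕ) : ℝ)⁻¹ * r) := by
          rw [Real.mul_rpow hC.le (by positivity), Real.pow_rpow_inv_natCast hr (by omega)]
  have hlim : Tendsto (fun k : ℕ => ENNReal.ofReal (C ^ (k : ℝ)⁻¹ * r)) atTop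
      (𝓝 (ENNReal.ofReal r)) := by
    refine ENNReal.tendsto_ofReal ?_
    simpa using ((tendsto_const_nhds.rpow (tendsto_inv_atTop_zero.comp
      tendsto_natCast_atTop_atTop) (Or.inl hC.ne')).mul_const r)
  refine ge_of_tendsto_of_frequently hlim ((h.and_eventually (eventually_ge_atTop 1)).mono ?_)
  rintro k ⟨hk, hk1⟩
  obtain ⟨n, rfl⟩ := Nat.exists_eq_add_of_le' hk1
  exact hroot n hk

theorem mem_spectrum_of_inner_apply_eq {𝕜 E : Type*} [RCLike 𝕜] [NormedAddCommGroup E]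
    [InnerProductSpace 𝕜 E] (T : E →L[𝕜] E) {l : 𝕜} {v : E} (hv : v ≠ 0)
    (h : ∀ x, ⟪v, T x⟫_𝕜 = l * ⟪v, x⟫_𝕜) : l ∈ spectrum 𝕜 T := by
  rintro ⟨u, hu⟩
  have horth : ∀ y, ⟪v, (u : E →L[𝕜] E) y⟫_𝕜 = 0 := fun y => by
    simp [hu, Algebra.algebraMap_eq_smul_one, inner_sub_right, inner_smul_right, h]
  have hv' : (u : E →L[𝕜] E) ((↑u⁻¹ : E →L[𝕜] E) v) = v := by
    rw [← mul_apply_eq_comp, Units.mul_inv, one_apply_eq_self]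
  exact hv (inner_self_eq_zero.mp (hv' ▸ horth _))

section NormedField

variable {𝕜 : Type*} [NontriviallyNormedField 𝕜]

instance : Nontrivial ℓ²(ℕ, 𝕜) :=
  ⟨⟨lp.single 2 0 1, 0, fun h => by simpa using congrArg norm h⟩⟩

def IsWeightedShift (T : ℓ²(ℕ, 𝕜) →L[𝕜] ℓ²(ℕ, 𝕜)) (c : ℕ → 𝕜) (k : ℕ) : Prop :=
  ∀ n, T (lp.single 2 n 1) = c n • lp.single 2 (n + k) 1

namespace IsWeightedShift

variable {T : ℓ²(ℕ, 𝕜) →L[𝕜] ℓ²(ℕ, 𝕜)} {c : ℕ → 𝕜} {k : ℕ}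

theorem hasSum_apply (hT : IsWeightedShift T c k) (x : ℓ²(ℕ, 𝕜)) (i : ℕ) :
    HasSum (fun n => if n + k = i then c n * x n else 0) (T x i) := by
  refine ((lp.hasSum_single (by norm_num) x).mapL ((lp.evalCLM 𝕜 _ 2 i).comp T)).congr_fun
    fun n => ?_
  have hsingle : (lp.single 2 n (x n) : ℓ²(ℕ, 𝕜)) = x n • lp.single 2 n 1 := by
    rw [← lp.single_smul, smul_eq_mul, mul_one]
  rw [ContinuousLinearMap.comp_apply, hsingle, map_smul, hT, smul_smul]
  simp [lp.evalCLM, lp.single_apply, Pi.single_apply, eq_comm, mul_comm]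

theorem apply_add (hT : IsWeightedShift T c k) (x : ℓ²(ℕ, 𝕜)) (n : ℕ) :
    T x (n + k) = c n * x n := by
  refine (hT.hasSum_apply x (n + k)).unique ((hasSum_ite_eq n (c n * x n)).congr_fun fun m => ?_)
  by_cases h : m = n <;> simp [h]

theorem apply_of_lt (hT : IsWeightedShift T c k) (x : ℓ²(ℕ, 𝕜)) {i : ℕ} (hi : i < k) :
    T x i = 0 :=
  (hT.hasSum_apply x i).unique <| by simp [show ∀ n, n + k ≠ i by omega]

theorem norm_le (hT : IsWeightedShift T c k) {C : ℝ} (hC : 0 ≤ C) (hc : ∀ n, ‖c n‖ ≤ C) :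
    ‖T‖ ≤ C := by
  refine T.opNorm_le_bound hC fun x => ?_
  have hp : (0 : ℝ) < (2 : ENNReal).toReal := by norm_num
  have hTx : HasSum (fun n => ‖c n * x n‖ ^ 2) (‖T x‖ ^ 2) := by
    have h0 : ∑ i ∈ range k, ‖T x i‖ ^ 2 = 0 :=
      sum_eq_zero fun i hi => by simp [hT.apply_of_lt x (mem_range.mp hi)]
    have := (hasSum_nat_add_iff' k).mpr (lp.hasSum_norm hp (T x))
    simp only [ENNReal.toReal_ofNat, Real.rpow_two, h0, sub_zero, hT.apply_add] at this
    exact this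
  have hx : HasSum (fun n => C ^ 2 * ‖x n‖ ^ 2) (C ^ 2 * ‖x‖ ^ 2) := by
    simpa using (lp.hasSum_norm hp x).mul_left (C ^ 2)
  have hsq : ‖T x‖ ^ 2 ≤ (C * ‖x‖) ^ 2 := by
    rw [mul_pow]
    refine hasSum_le (fun n => ?_) hTx hx
    rw [norm_mul, mul_pow]
    gcongr
    exact hc n
  exact le_of_pow_le_pow_left₀ two_ne_zero (by positivity) hsq

theorem norm_le_norm (hT : IsWeightedShift T c k) (n : ℕ) : ‖c n‖ ≤ ‖T‖ := by
  simpa [hT n, norm_smul, lp.norm_single] using T.le_opNorm (lp.single 2 n 1)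

theorem norm_eq (hT : IsWeightedShift T c k) {C : ℝ} (hc : ∀ n, ‖c n‖ ≤ C) {n₀ : ℕ}
    (hn₀ : ‖c n₀‖ = C) : ‖T‖ = C :=
  le_antisymm (hT.norm_le (hn₀ ▸ norm_nonneg _) hc) (hn₀ ▸ hT.norm_le_norm n₀)

theorem norm_eq_of_ite {p : ℕ → Prop} [DecidablePred p] {a : 𝕜}
    (hT : IsWeightedShift T (fun n => if p n then a else 0) k) (hp : ∃ n, p n) : ‖T‖ = ‖a‖ :=
  hT.norm_eq (n₀ := hp.choose) (fun n => by split_ifs <;> simp) (by simp [hp.choose_spec])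

theorem pow (hT : IsWeightedShift T c 1) (k : ℕ) :
    IsWeightedShift (T ^ k) (fun n => ∏ t ∈ range k, c (n + t)) k := by
  induction k with
  | zero => intro n; simp
  | succ k ih =>
    intro n
    rw [pow_succ, mul_apply_eq_comp, hT n, map_smul, ih (n + 1), smul_smul]
    dsimp only
    rw [prod_range_succ']
    simp only [add_assoc, add_comm 1, add_zero, mul_comm]

end IsWeightedShift

end NormedField

namespace IsWeightedShift

variable {𝕜 : Type*} [RCLike 𝕜] {T : ℓ²(ℕ, 𝕜) →L[𝕜] ℓ²(ℕ, 𝕜)} {c : ℕ → 𝕜}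

theorem mem_spectrum (hT : IsWeightedShift T c 1) {l : 𝕜} {v : ℓ²(ℕ, 𝕜)} (hv : v ≠ 0)
    (h : ∀ n, conj (c n) * v (n + 1) = conj l * v n) : l ∈ spectrum 𝕜 T := by
  refine mem_spectrum_of_inner_apply_eq T hv fun x => ?_
  have hTx : HasSum (fun i => ⟪v i, T x i⟫_𝕜) ⟪v, T x⟫_𝕜 := lp.hasSum_inner v (T x)
  rw [← hasSum_nat_add_iff' 1] at hTx
  simp only [hT.apply_add, sum_range_one, hT.apply_of_lt x zero_lt_one, inner_zero_right,
    sub_zero] at hTx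
  refine hTx.unique (((lp.hasSum_inner v x).mul_left l).congr_fun fun n => ?_)
  have := congrArg conj (h n)
  simp only [map_mul, RCLike.conj_conj] at this
  simp only [RCLike.inner_apply]
  linear_combination x n * this

end IsWeightedShift

noncomputable def kakutaniWeight (M K : ℝ) (n : ℕ) : ℝ := M / K ^ (n + 1).factorization 2

noncomputable def kakutaniEigenvector (M K l : ℝ) (n : ℕ) : ℝ :=
  (l / M) ^ n * K ^ (n !).factorization 2

section Kakutani

variable {M K : ℝ}

@[simp] theorem kakutaniWeight_zero : kakutaniWeight M K 0 = M := by simp [kakutaniWeight]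

theorem kakutaniWeight_le (hM : 0 ≤ M) (hK : 1 ≤ K) (n : ℕ) : kakutaniWeight M K n ≤ M :=
  div_le_self hM (one_le_pow₀ hK)

theorem kakutaniWeight_nonneg (hM : 0 ≤ M) (hK : 0 ≤ K) (n : ℕ) : 0 ≤ kakutaniWeight M K n := by
  unfold kakutaniWeight; positivity

theorem prod_kakutaniWeight_le (hM : 0 ≤ M) (hK : 1 ≤ K) (n k : ℕ) :
    ∏ t ∈ range k, kakutaniWeight M K (n + t) ≤ M ^ k / K ^ (k !).factorization 2 := by
  simp only [kakutaniWeight, prod_div_distrib, prod_const, card_range, prod_pow_eq_pow_sum]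
  gcongr
  exact Nat.factorization_factorial_le_sum_factorization 2 n k

theorem kakutaniWeight_mul_kakutaniEigenvector (hM : M ≠ 0) (hK : K ≠ 0) (l : ℝ) (n : ℕ) :
    kakutaniWeight M K n * kakutaniEigenvector M K l (n + 1) = l * kakutaniEigenvector M K l n := by
  have hfac : ((n + 1)!).factorization 2 = (n + 1).factorization 2 + (n !).factorization 2 := by
    rw [Nat.factorial_succ, Nat.factorization_mul n.succ_ne_zero n.factorial_ne_zero,
      Finsupp.add_apply]
  rw [kakutaniWeight, kakutaniEigenvector, kakutaniEigenvector, hfac, pow_succ, pow_add]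
  field_simp

theorem memℓp_kakutaniEigenvector (hM : 0 < M) (hK : 1 ≤ K) {l : ℝ} (hl : 0 ≤ l)
    (hlK : l * K < M) : Memℓp (kakutaniEigenvector M K l) 2 := by
  set r := l * K / M
  have hr : r < 1 := (div_lt_one hM).mpr hlK
  have hbound : ∀ n, ‖kakutaniEigenvector M K l n‖ ^ 2 ≤ (r ^ 2) ^ n := fun n => by
    have hnonneg : 0 ≤ kakutaniEigenvector M K l n := by unfold kakutaniEigenvector; positivity
    rw [← pow_mul, mul_comm, pow_mul, Real.norm_eq_abs, abs_of_nonneg hnonneg]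
    refine pow_le_pow_left₀ hnonneg ?_ 2
    calc kakutaniEigenvector M K l n ≤ (l / M) ^ n * K ^ n := by
          unfold kakutaniEigenvector
          gcongr
          exact Nat.factorization_two_factorial_le n
      _ = r ^ n := by rw [← mul_pow]; ring
  refine memℓp_gen (Summable.of_nonneg_of_le (fun n => by positivity) (fun n => ?_)
    (summable_geometric_of_lt_one (by positivity) (pow_lt_one₀ (by positivity) hr two_ne_zero)))
  simpa using hbound n

namespace IsWeightedShift

variable {W : ℓ²(ℕ, ℝ) →L[ℝ] ℓ²(ℕ, ℝ)}

theorem norm_eq_of_kakutaniWeight (hW : IsWeightedShift W (kakutaniWeight M K) 1)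
    (hM : 0 ≤ M) (hK : 1 ≤ K) : ‖W‖ = M :=
  hW.norm_eq (n₀ := 0) (fun n => by
      rw [Real.norm_of_nonneg (kakutaniWeight_nonneg hM (by positivity) n)]
      exact kakutaniWeight_le hM hK n)
    (by simp [hM])

theorem norm_pow_two_pow_le_of_kakutaniWeight (hW : IsWeightedShift W (kakutaniWeight M K) 1)
    (hM : 0 ≤ M) (hK : 1 ≤ K) (j : ℕ) : ‖W ^ 2 ^ j‖ ≤ K * (M / K) ^ 2 ^ j := by
  refine (hW.pow (2 ^ j)).norm_le (by positivity) fun n => ?_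
  have hKpow : K ^ 2 ^ j = K ^ (2 ^ j - 1) * K := by
    rw [← pow_succ, Nat.sub_add_cancel Nat.one_le_two_pow]
  rw [Real.norm_of_nonneg (prod_nonneg fun t _ => kakutaniWeight_nonneg hM (by positivity) _)]
  calc ∏ t ∈ range (2 ^ j), kakutaniWeight M K (n + t)
      ≤ M ^ 2 ^ j / K ^ ((2 ^ j)!).factorization 2 := prod_kakutaniWeight_le hM hK n _
    _ = K * (M / K) ^ 2 ^ j := by
        rw [Nat.factorization_two_factorial_two_pow, div_pow, hKpow]
        field_simp

theorem spectralRadius_le_of_kakutaniWeight (hW : IsWeightedShift W (kakutaniWeight M K) 1)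
    (hM : 0 ≤ M) (hK : 1 ≤ K) : spectralRadius ℝ W ≤ ENNReal.ofReal (M / K) :=
  spectralRadius_le_of_frequently_norm_pow_le W (by positivity) (by positivity) <|
    frequently_atTop.mpr fun a =>
      ⟨2 ^ a, a.lt_two_pow_self.le, hW.norm_pow_two_pow_le_of_kakutaniWeight hM hK a⟩

theorem mem_spectrum_of_kakutaniWeight (hW : IsWeightedShift W (kakutaniWeight M K) 1)
    (hM : 0 < M) (hK : 1 ≤ K) {l : ℝ} (hl : 0 ≤ l) (hlK : l * K < M) : l ∈ spectrum ℝ W := by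
  refine hW.mem_spectrum (v := ⟨_, memℓp_kakutaniEigenvector hM hK hl hlK⟩)
    (fun h => by simpa [kakutaniEigenvector] using congrArg (fun v : ℓ²(ℕ, ℝ) => v 0) h)
    fun n => ?_
  simpa using kakutaniWeight_mul_kakutaniEigenvector hM.ne' (by positivity) l n

theorem div_mem_spectrum_of_kakutaniWeight (hW : IsWeightedShift W (kakutaniWeight M K) 1)
    (hM : 0 < M) (hK : 1 ≤ K) : M / K ∈ spectrum ℝ W := by
  have hK0 : 0 < K := by positivity
  have hIco : Set.Ico 0 (M / K) ⊆ spectrum ℝ W := fun l ⟨hl, hlK⟩ =>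
    hW.mem_spectrum_of_kakutaniWeight hM hK hl ((lt_div_iff₀ hK0).mp hlK)
  have hclosure := (spectrum.isClosed W).closure_subset_iff.mpr hIco
  rw [closure_Ico (div_pos hM hK0).ne] at hclosure
  exact hclosure (Set.right_mem_Icc.mpr (by positivity))

theorem spectralRadius_eq_of_kakutaniWeight (hW : IsWeightedShift W (kakutaniWeight M K) 1)
    (hM : 0 < M) (hK : 1 ≤ K) : spectralRadius ℝ W = ENNReal.ofReal (M / K) := by
  refine le_antisymm (hW.spectralRadius_le_of_kakutaniWeight hM.le hK) ?_
  have := le_iSup₂ (f := fun k (_ : k ∈ spectrum ℝ W) => (‖k‖₊ : ENNReal)) _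
    (hW.div_mem_spectrum_of_kakutaniWeight hM hK)
  rwa [← enorm_eq_nnnorm, ← ofReal_norm, Real.norm_of_nonneg (by positivity)] at this

end IsWeightedShift

end Kakutani

/-- Kakutani's construction, norms and spectral radius.
With `ε_m = M/K^(m−1)` (`M > 0`, `K > 1`), the Kakutani weighted shift `W_ε`
(weight `ε_m` at the positions `n = 2^(m−1)(2ℓ+1)`) satisfies `‖W_ε‖ = M` and
`ρ(W_ε) = M/K`; the shifts `L_m` retaining only the `ε_m` weights satisfy
`‖L_m‖ = ε_m = M/K^(m−1) → 0` as `m → ∞`.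
(The basis vector `lp.single 2 n 1` represents `e_{n+1}`, i.e. position `n+1`;
the exponent `m − 1` for position `p` is `p.factorization 2`.) -/
theorem stmt13 (M K : ℝ) (hM : 0 < M) (hK : 1 < K)
    (W : lp (fun _ : ℕ => ℝ) 2 →L[ℝ] lp (fun _ : ℕ => ℝ) 2)
    (hW : ∀ n : ℕ,
      W (lp.single 2 n 1) = (M / K ^ ((n + 1).factorization 2)) • lp.single 2 (n + 1) 1)
    (L : ℕ → (lp (fun _ : ℕ => ℝ) 2 →L[ℝ] lp (fun _ : ℕ => ℝ) 2))
    (hL : ∀ m : ℕ, 1 ≤ m → ∀ n : ℕ,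
      L m (lp.single 2 n 1) =
        (if (n + 1).factorization 2 = m - 1 then M / K ^ (m - 1) else 0) •
          lp.single 2 (n + 1) 1) :
    ‖W‖ = M ∧ spectralRadius ℝ W = ENNReal.ofReal (M / K) ∧
    (∀ m : ℕ, 1 ≤ m → ‖L m‖ = M / K ^ (m - 1)) ∧
    Filter.Tendsto (fun m : ℕ => ‖L m‖) Filter.atTop (nhds 0) := by
  have hW' : IsWeightedShift W (kakutaniWeight M K) 1 := hW
  have hLnorm : ∀ m, 1 ≤ m → ‖L m‖ = M / K ^ (m - 1) := fun m hm => by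
    have hwitness : (2 ^ (m - 1) - 1 + 1).factorization 2 = m - 1 := by
      simp [Nat.sub_add_cancel Nat.one_le_two_pow, Nat.prime_two.factorization_self]
    rw [IsWeightedShift.norm_eq_of_ite (hL m hm) ⟨_, hwitness⟩,
      Real.norm_of_nonneg (by positivity)]
  refine ⟨hW'.norm_eq_of_kakutaniWeight hM.le hK.le,
    hW'.spectralRadius_eq_of_kakutaniWeight hM hK.le, hLnorm, ?_⟩
  refine ((tendsto_const_nhds (x := M)).div_atTop
    ((tendsto_pow_atTop_atTop_of_one_lt hK).comp (tendsto_sub_atTop_nat 1))).congr' ?_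
  filter_upwards [eventually_ge_atTop 1] with m hm using (hLnorm m hm).symm
end
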